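/- arXiv:2603.28031 — 2 statements merged into one kernel-verified Lean document; each statement's English description precedes it below -/
import Mathlib

section
/- Let 1 ≤ s ≤ m, k ≥ 1, d' < k, and fix a layer assignment f into d' layers with uninformed-link set U. For a chain drawn from the random (k,m,s)-distribution and any deterministic message-augmented d'-layer strategy of width w with per-link message sizes (b_ℓ)_{ℓ∈U}, the probability that some candidate tuple lies in Spec_cg is at most w · Π_{ℓ∈U} min(1, 2^{b_ℓ} · s/m). -/
/-!
A `k`-position constraint chain over `[m]` with sparsity `s` (positions are
0-indexed as `Fin k`; the link `ℓ-1 → ℓ` is represented by the index `ℓ` with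
`0 < ℓ.val`; the field `row ℓ a` is the successor set `P_ℓ(a)`, meaningful for
`0 < ℓ.val`).
-/
structure ConstraintChain (k m s : ℕ) where
  P1 : Finset (Fin m)
  row : Fin k → Fin m → Finset (Fin m)
  card_P1 : P1.card = s
  card_row : ∀ ℓ a, (row ℓ a).card = s

namespace ConstraintChain

/-- The predecessor position of `ℓ`. -/
def pred {k : ℕ} (ℓ : Fin k) : Fin k :=
  ⟨ℓ.val - 1, Nat.lt_of_le_of_lt (Nat.sub_le _ _) ℓ.isLt⟩

/-- Membership of the tuple `v` in the admissible set `Spec_cg` of the chain. -/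
def InSpec {k m s : ℕ} (c : ConstraintChain k m s) (v : Fin k → Fin m) : Prop :=
  (∀ h : 0 < k, v ⟨0, h⟩ ∈ c.P1) ∧
    ∀ ℓ : Fin k, 0 < ℓ.val → v ℓ ∈ c.row ℓ (v (pred ℓ))

end ConstraintChain

/-- Link `ℓ` is informed under the layer assignment `f`:
its predecessor is placed in a strictly earlier layer. -/
abbrev Informed {k d' : ℕ} (f : Fin k → Fin d') (ℓ : Fin k) : Prop :=
  0 < ℓ.val ∧ f (ConstraintChain.pred ℓ) < f ℓ

/-- Link `ℓ` is uninformed under the layer assignment `f`. -/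
abbrev Uninformed {k d' : ℕ} (f : Fin k → Fin d') (ℓ : Fin k) : Prop :=
  0 < ℓ.val ∧ ¬ f (ConstraintChain.pred ℓ) < f ℓ

/-!
Fix a candidate and everything the strategy sees except the rows at uninformed links. The
candidate is then a function of the messages alone, so on the event that the message vector
equals `μ` it is a fixed tuple, and at every uninformed link `ℓ` the uniformly random row must
contain a prescribed element in a prescribed set, which has probability `s/m`. Rows at distinct
links are independent, so this event contributes at most `∏ ℓ, min (P(M_ℓ = μ_ℓ), s/m)`. Summing
over the at most `2 ^ b ℓ` values of each message gives `∏ ℓ, min (1, 2 ^ b ℓ * s/m)`, and a union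
bound over the `w` candidates finishes the proof.
-/

open Finset

lemma card_filter_mem_le_choose {α : Type*} [Fintype α] [DecidableEq α] (s : ℕ) (a : α) :
    #{t : {t : Finset α // #t = s} | a ∈ t.1} ≤ (Fintype.card α - 1).choose (s - 1) := by
  calc #{t : {t : Finset α // #t = s} | a ∈ t.1}
      ≤ #(powersetCard (s - 1) (univ.erase a)) := by
        refine card_le_card_of_injOn (fun t => t.1.erase a) (fun t ht => ?_)
          fun t ht u hu htu => ?_
        · have ht : a ∈ t.1 := by simpa using ht
          simp [mem_powersetCard, erase_subset_erase, card_erase_of_mem ht, t.2]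
        · have ht : a ∈ t.1 := by simpa using ht
          have hu : a ∈ u.1 := by simpa using hu
          exact Subtype.ext (erase_injOn' a ht hu htu)
    _ = (Fintype.card α - 1).choose (s - 1) := by
        rw [card_powersetCard, card_erase_of_mem (mem_univ a), card_univ]

lemma card_filter_apply_mul {ι β : Type*} [Fintype ι] [DecidableEq ι] [Fintype β] [DecidableEq β]
    (a : ι) (P : β → Prop) [DecidablePred P] :
    #{g : ι → β | P (g a)} * Fintype.card β = #{b | P b} * Fintype.card β ^ Fintype.card ι := by
  have hfiber : ∀ b, #{g : ι → β | g a = b} = Fintype.card β ^ (Fintype.card ι - 1) := fun b => by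
    simpa using Fintype.card_filter_piFinset_const_eq_of_mem (univ : Finset β) a (mem_univ b)
  have hsplit : #{g : ι → β | P (g a)} = ∑ b ∈ {b | P b}, #{g : ι → β | g a = b} := by
    rw [card_eq_sum_card_fiberwise (f := fun g => g a) (t := {b | P b})
      (fun g hg => by simpa using hg)]
    refine sum_congr rfl fun b hb => ?_
    rw [filter_filter]
    refine congrArg card (filter_congr fun g _ => ?_)
    simp only [mem_filter, mem_univ, true_and] at hb
    exact ⟨And.right, fun h => ⟨h ▸ hb, h⟩⟩
  rw [hsplit, sum_congr rfl fun b _ => hfiber b, sum_const, smul_eq_mul, mul_assoc, ← pow_succ,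
    Nat.sub_add_cancel (Fintype.card_pos_iff.mpr ⟨a⟩)]

lemma sum_min_card_fiber_le {R F : Type*} [Fintype R] [Fintype F] [DecidableEq F]
    (M : R → F) (p : ℝ) :
    ∑ v, min (#{r | M r = v} : ℝ) (p * Fintype.card R) ≤
      min 1 (Fintype.card F * p) * Fintype.card R := by
  have hfibers : ∑ v, (#{r | M r = v} : ℝ) = Fintype.card R := by
    exact_mod_cast (card_eq_sum_card_fiberwise (f := M) (t := univ) (fun r _ => mem_univ _)).symm
  calc ∑ v, min (#{r | M r = v} : ℝ) (p * Fintype.card R)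
      ≤ min (∑ v, (#{r | M r = v} : ℝ)) (∑ _v : F, p * Fintype.card R) := sum_min_le
    _ = min 1 (Fintype.card F * p) * Fintype.card R := by
        rw [hfibers, sum_const, card_univ, nsmul_eq_mul, min_mul_of_nonneg _ _ (by positivity),
          one_mul, mul_assoc]

theorem natCard_forall_msg_le {ι R : Type*} [Fintype ι] [Fintype R] {F : ι → Type*}
    [∀ i, Fintype (F i)] (M : ∀ i, R → F i) (Q : ι → (∀ j, F j) → R → Prop) (p : ι → ℝ)
    (hp : ∀ i, 0 ≤ p i) (hQ : ∀ i μ, (Nat.card {r // Q i μ r} : ℝ) ≤ p i * Nat.card R) :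
    (Nat.card {g : ι → R // ∀ i, Q i (fun j => M j (g j)) (g i)} : ℝ) ≤
      ∏ i, min 1 (Nat.card (F i) * p i) * Nat.card R := by
  classical
  simp only [Nat.card_eq_fintype_card, Fintype.card_subtype] at hQ ⊢
  set msg : (ι → R) → ∀ j, F j := fun g j => M j (g j)
  have hfiber : ∀ μ, ({g ∈ {g : ι → R | ∀ i, Q i (msg g) (g i)} | msg g = μ} : Finset _) =
      Fintype.piFinset fun i => {r | M i r = μ i ∧ Q i μ r} := fun μ => by
    ext g
    simp only [mem_filter, mem_univ, true_and, Fintype.mem_piFinset, forall_and]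
    constructor
    · rintro ⟨hQg, rfl⟩
      exact ⟨fun i => rfl, hQg⟩
    · rintro ⟨hμ, hQg⟩
      obtain rfl : msg g = μ := funext hμ
      exact ⟨hQg, rfl⟩
  calc (#{g : ι → R | ∀ i, Q i (msg g) (g i)} : ℝ)
      = ∑ μ : ∀ j, F j, ∏ i, (#{r | M i r = μ i ∧ Q i μ r} : ℝ) := by
        rw [card_eq_sum_card_fiberwise (f := msg) (t := univ) (fun g _ => mem_univ _)]
        simp only [hfiber, Fintype.card_piFinset, Nat.cast_sum, Nat.cast_prod]
    _ ≤ ∑ μ : ∀ j, F j, ∏ i, min (#{r | M i r = μ i} : ℝ) (p i * Fintype.card R) := by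
        refine sum_le_sum fun μ _ => prod_le_prod (fun i _ => by positivity) fun i _ => ?_
        refine le_min ?_ (le_trans ?_ (hQ i μ))
        · exact_mod_cast card_le_card (monotone_filter_right _ fun r _ (h : _ ∧ _) => h.1)
        · exact_mod_cast card_le_card (monotone_filter_right _ fun r _ (h : _ ∧ _) => h.2)
    _ = ∏ i, ∑ v, min (#{r | M i r = v} : ℝ) (p i * Fintype.card R) :=
        (Fintype.prod_sum fun i v => min (#{r | M i r = v} : ℝ) (p i * Fintype.card R)).symm
    _ ≤ ∏ i, min 1 (Fintype.card (F i) * p i) * Fintype.card R :=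
        prod_le_prod (fun i _ => sum_nonneg fun v _ => le_min (by positivity)
          (by have := hp i; positivity)) fun i _ => sum_min_card_fiber_le (M i) (p i)

lemma natCard_exists_le_sum {α ι : Type*} [Finite α] [Fintype ι] (P : ι → α → Prop) :
    Nat.card {a // ∃ i, P i a} ≤ ∑ i, Nat.card {a // P i a} := by
  classical
  have := Fintype.ofFinite α
  simp only [Nat.card_eq_fintype_card, Fintype.card_subtype]
  calc #{a | ∃ i, P i a} = #(univ.biUnion fun i => {a | P i a}) := by
        congr 1; ext a; simp
    _ ≤ ∑ i, #{a | P i a} := card_biUnion_le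

namespace ConstraintChain

abbrev SizedSubset (m s : ℕ) : Type := {t : Finset (Fin m) // #t = s}

abbrev Row (m s : ℕ) : Type := Fin m → SizedSubset m s

lemma mul_card_filter_mem_le {m s : ℕ} (hs : 1 ≤ s) (x : Fin m) :
    m * #{t : SizedSubset m s | x ∈ t.1} ≤ s * Fintype.card (SizedSubset m s) := by
  obtain ⟨m, rfl⟩ := Nat.exists_eq_add_one_of_ne_zero (Fin.pos x).ne'
  obtain ⟨s, rfl⟩ := Nat.exists_eq_add_one_of_ne_zero (by omega : s ≠ 0)
  calc (m + 1) * #{t : SizedSubset (m + 1) (s + 1) | x ∈ t.1} ≤ (m + 1) * m.choose s := by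
        simpa using Nat.mul_le_mul_left (m + 1) (card_filter_mem_le_choose (s + 1) x)
    _ = (s + 1) * Fintype.card (SizedSubset (m + 1) (s + 1)) := by
        rw [Nat.add_one_mul_choose_eq, Fintype.card_finset_len, Fintype.card_fin, mul_comm]

lemma natCard_mem_row_le {m s : ℕ} (hs : 1 ≤ s) (hsm : s ≤ m) (a x : Fin m) :
    (Nat.card {r : Row m s // x ∈ (r a).1} : ℝ) ≤ s / m * Nat.card (Row m s) := by
  rw [Nat.card_eq_fintype_card, Fintype.card_subtype, Nat.card_eq_fintype_card]
  have hS : 0 < Fintype.card (SizedSubset m s) := by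
    rw [Fintype.card_finset_len, Fintype.card_fin]; exact Nat.choose_pos hsm
  have hm : (0 : ℝ) < m := by exact_mod_cast Fin.pos x
  have key : m * #{r : Row m s | x ∈ (r a).1} * Fintype.card (SizedSubset m s) ≤
      s * Fintype.card (Row m s) * Fintype.card (SizedSubset m s) :=
    calc m * #{r : Row m s | x ∈ (r a).1} * Fintype.card (SizedSubset m s)
        = m * #{t : SizedSubset m s | x ∈ t.1} * Fintype.card (Row m s) := by
          rw [mul_assoc, card_filter_apply_mul a (fun t : SizedSubset m s => x ∈ t.1),
            Fintype.card_fin, Fintype.card_fun, Fintype.card_fin, mul_assoc]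
      _ ≤ s * Fintype.card (SizedSubset m s) * Fintype.card (Row m s) :=
          Nat.mul_le_mul_right _ (mul_card_filter_mem_le hs x)
      _ = _ := by ring
  have key' : (m : ℝ) * #{r : Row m s | x ∈ (r a).1} ≤ s * Fintype.card (Row m s) := by
    exact_mod_cast Nat.le_of_mul_le_mul_right key hS
  rw [div_mul_eq_mul_div, le_div_iff₀ hm]
  linarith

variable {k m s d' : ℕ}

def equivProd : ConstraintChain k m s ≃ SizedSubset m s × (Fin k → Row m s) where
  toFun c := (⟨c.P1, c.card_P1⟩, fun ℓ a => ⟨c.row ℓ a, c.card_row ℓ a⟩)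
  invFun x := ⟨x.1.1, fun ℓ a => (x.2 ℓ a).1, x.1.2, fun ℓ a => (x.2 ℓ a).2⟩
  left_inv _ := rfl
  right_inv _ := rfl

instance : Fintype (ConstraintChain k m s) := Fintype.ofEquiv _ equivProd.symm

def equivSplit (p : Fin k → Prop) [DecidablePred p] :
    ConstraintChain k m s ≃
      (SizedSubset m s × ({ℓ // ¬ p ℓ} → Row m s)) × ({ℓ // p ℓ} → Row m s) :=
  equivProd.trans <|
    ((Equiv.refl _).prodCongr ((Equiv.piEquivPiSubtypeProd p _).trans (Equiv.prodComm _ _))).trans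
      (Equiv.prodAssoc _ _ _).symm

section equivSplit

variable (p : Fin k → Prop) [DecidablePred p] (x : SizedSubset m s × ({ℓ // ¬ p ℓ} → Row m s))
  (g : {ℓ // p ℓ} → Row m s)

lemma equivSplit_symm_row_coe (i : {ℓ // p ℓ}) :
    ((equivSplit p).symm (x, g)).row i = fun a => (g i a).1 := by
  simp [equivSplit, equivProd, Equiv.piEquivPiSubtypeProd_symm_apply, i.2]

lemma equivSplit_symm_row_of_neg {ℓ : Fin k} (hℓ : ¬ p ℓ) :
    ((equivSplit p).symm (x, g)).row ℓ = fun a => (x.2 ⟨ℓ, hℓ⟩ a).1 := by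
  simp [equivSplit, equivProd, Equiv.piEquivPiSubtypeProd_symm_apply, hℓ]

lemma natCard_eq_mul_natCard_row_pow :
    Nat.card (ConstraintChain k m s) =
      Nat.card (SizedSubset m s × ({ℓ // ¬ p ℓ} → Row m s)) * Nat.card (Row m s) ^ #{ℓ | p ℓ} := by
  rw [Nat.card_congr (equivSplit p), Nat.card_prod, Nat.card_fun,
    Nat.card_eq_fintype_card (α := {ℓ // p ℓ}), Fintype.card_subtype]

end equivSplit

def IsMessageAugmented {β : Type*} (f : Fin k → Fin d') {F : Fin k → Type*}
    (M : ∀ ℓ : Fin k, (Fin m → Finset (Fin m)) → F ℓ) (V : ConstraintChain k m s → β) : Prop :=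
  ∀ c c' : ConstraintChain k m s, c.P1 = c'.P1 →
    (∀ ℓ : Fin k, Informed f ℓ → ∀ a : Fin m, c.row ℓ a = c'.row ℓ a) →
    (∀ ℓ : Fin k, Uninformed f ℓ → M ℓ (c.row ℓ) = M ℓ (c'.row ℓ)) →
    V c = V c'

lemma IsMessageAugmented.exists_eq_comp {β : Type*} [Nonempty β] {f : Fin k → Fin d'}
    {F : Fin k → Type*} {M : ∀ ℓ : Fin k, (Fin m → Finset (Fin m)) → F ℓ}
    {V : ConstraintChain k m s → β} (hV : IsMessageAugmented f M V)
    (x : SizedSubset m s × ({ℓ // ¬ Uninformed f ℓ} → Row m s)) :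
    ∃ Φ : (∀ i : {ℓ // Uninformed f ℓ}, F i) → β, ∀ g,
      V ((equivSplit (Uninformed f)).symm (x, g)) = Φ fun i => M i fun a => (g i a).1 := by
  have hfactor : Function.FactorsThrough (fun g => V ((equivSplit (Uninformed f)).symm (x, g)))
      fun g (i : {ℓ // Uninformed f ℓ}) => M i fun a => (g i a).1 := fun g g' hgg' =>
    hV _ _ rfl
      (fun ℓ hℓ a => by
        have hℓ' : ¬ Uninformed f ℓ := fun h => h.2 hℓ.2
        rw [equivSplit_symm_row_of_neg _ _ _ hℓ', equivSplit_symm_row_of_neg _ _ _ hℓ'])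
      (fun ℓ hℓ => by
        rw [equivSplit_symm_row_coe _ _ _ ⟨ℓ, hℓ⟩, equivSplit_symm_row_coe _ _ _ ⟨ℓ, hℓ⟩]
        exact congrFun hgg' ⟨ℓ, hℓ⟩)
  obtain ⟨Φ, hΦ⟩ := (Function.factorsThrough_iff _).mp hfactor
  exact ⟨Φ, congrFun hΦ⟩

def InSpecAtUninformed (f : Fin k → Fin d') (c : ConstraintChain k m s) (v : Fin k → Fin m) :
    Prop :=
  ∀ i : {ℓ // Uninformed f ℓ}, v i ∈ c.row i (v (pred i))

lemma InSpec.inSpecAtUninformed {c : ConstraintChain k m s} {v : Fin k → Fin m}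
    (hv : c.InSpec v) (f : Fin k → Fin d') : c.InSpecAtUninformed f v :=
  fun i => hv.2 i i.2.1

section bounds

variable (hs : 1 ≤ s) (hsm : s ≤ m) (f : Fin k → Fin d') (b : Fin k → ℕ) {F : Fin k → Type*}
  [∀ ℓ, Fintype (F ℓ)] (hF : ∀ ℓ, Uninformed f ℓ → Fintype.card (F ℓ) ≤ 2 ^ b ℓ)
  (M : ∀ ℓ : Fin k, (Fin m → Finset (Fin m)) → F ℓ) {V : ConstraintChain k m s → Fin k → Fin m}
  (hV : IsMessageAugmented f M V)
include hs hsm hF hV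

lemma natCard_inSpecAtUninformed_equivSplit_le
    (x : SizedSubset m s × ({ℓ // ¬ Uninformed f ℓ} → Row m s)) :
    (Nat.card {g : {ℓ // Uninformed f ℓ} → Row m s //
      let c := (equivSplit (Uninformed f)).symm (x, g); c.InSpecAtUninformed f (V c)} : ℝ) ≤
      ∏ i : {ℓ // Uninformed f ℓ}, min 1 ((2 : ℝ) ^ b i * s / m) * Nat.card (Row m s) := by
  have : NeZero m := ⟨by omega⟩
  obtain ⟨Φ, hΦ⟩ := hV.exists_eq_comp x
  simp only [InSpecAtUninformed, equivSplit_symm_row_coe, hΦ]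
  refine (natCard_forall_msg_le (F := fun i : {ℓ // Uninformed f ℓ} => F i)
    (fun i (r : Row m s) => M i fun a => (r a).1)
    (fun i μ r => Φ μ i ∈ (r (Φ μ (pred i))).1) (fun _ => (s / m : ℝ))
    (fun _ => by positivity) fun i μ => natCard_mem_row_le hs hsm _ _).trans ?_
  gcongr with i
  rw [mul_div_assoc, Nat.card_eq_fintype_card]
  gcongr
  exact_mod_cast hF i i.2

theorem natCard_inSpec_le :
    (Nat.card {c : ConstraintChain k m s // c.InSpec (V c)} : ℝ) ≤
      (∏ ℓ ∈ univ.filter (Uninformed f), min 1 ((2 : ℝ) ^ b ℓ * s / m)) *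
        Nat.card (ConstraintChain k m s) := by
  let e := equivSplit (k := k) (m := m) (s := s) (Uninformed f)
  calc (Nat.card {c : ConstraintChain k m s // c.InSpec (V c)} : ℝ)
      ≤ Nat.card {c : ConstraintChain k m s // c.InSpecAtUninformed f (V c)} := by
        exact_mod_cast Nat.card_le_card_of_injective
          (Subtype.impEmbedding (fun c : ConstraintChain k m s => c.InSpec (V c)) _
            fun c hc => hc.inSpecAtUninformed f)
          (Function.Embedding.injective _)
    _ = ∑ x, (Nat.card {g : {ℓ // Uninformed f ℓ} → Row m s //
          let c := e.symm (x, g); c.InSpecAtUninformed f (V c)} : ℝ) := by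
        rw [Nat.card_congr (e.subtypeEquiv (q := fun y =>
            let c := e.symm (y.1, y.2); c.InSpecAtUninformed f (V c))
            fun c => by simp only [Prod.mk.eta, Equiv.symm_apply_apply]),
          Nat.card_congr (Equiv.subtypeProdEquivSigmaSubtype fun x g =>
            let c := e.symm (x, g); c.InSpecAtUninformed f (V c)),
          Nat.card_sigma]
        push_cast
        rfl
    _ ≤ ∑ _x, ∏ i : {ℓ // Uninformed f ℓ}, min 1 ((2 : ℝ) ^ b i * s / m) * Nat.card (Row m s) :=
        sum_le_sum fun x _ => natCard_inSpecAtUninformed_equivSplit_le hs hsm f b hF M hV x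
    _ = _ := by
        rw [prod_subtype (p := Uninformed f) _ (by simp), sum_const, card_univ,
          prod_mul_distrib, prod_const, card_univ, natCard_eq_mul_natCard_row_pow (Uninformed f)]
        simp only [nsmul_eq_mul, Nat.card_eq_fintype_card, Fintype.card_subtype]
        push_cast
        ring

end bounds

end ConstraintChain

theorem stmt5_general
    {k m s d' w : ℕ} (hs : 1 ≤ s) (hsm : s ≤ m)
    (f : Fin k → Fin d') (b : Fin k → ℕ)
    (F : Fin k → Type) [∀ ℓ, Fintype (F ℓ)]
    (hF : ∀ ℓ : Fin k, Uninformed f ℓ → Fintype.card (F ℓ) ≤ 2 ^ (b ℓ))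
    (M : ∀ ℓ : Fin k, (Fin m → Finset (Fin m)) → F ℓ)
    (V : ConstraintChain k m s → Fin w → Fin k → Fin m)
    (hV : ∀ c c' : ConstraintChain k m s, c.P1 = c'.P1 →
      (∀ ℓ : Fin k, Informed f ℓ → ∀ a : Fin m, c.row ℓ a = c'.row ℓ a) →
      (∀ ℓ : Fin k, Uninformed f ℓ → M ℓ (c.row ℓ) = M ℓ (c'.row ℓ)) →
      V c = V c') :
    (Nat.card {c : ConstraintChain k m s // ∃ j : Fin w, c.InSpec (V c j)} : ℝ) /
        (Nat.card (ConstraintChain k m s) : ℝ) ≤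
      (w : ℝ) * ∏ ℓ ∈ Finset.univ.filter (fun ℓ : Fin k => Uninformed f ℓ),
        min 1 ((2 : ℝ) ^ (b ℓ) * (s : ℝ) / (m : ℝ)) := by
  set P := ∏ ℓ ∈ Finset.univ.filter (fun ℓ : Fin k => Uninformed f ℓ),
    min 1 ((2 : ℝ) ^ (b ℓ) * (s : ℝ) / (m : ℝ))
  have hcandidate : ∀ j, (Nat.card {c : ConstraintChain k m s // c.InSpec (V c j)} : ℝ) ≤
      P * Nat.card (ConstraintChain k m s) := fun j =>
    ConstraintChain.natCard_inSpec_le hs hsm f b hF M fun c c' hP₁ hinf hmsg =>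
      congrFun (hV c c' hP₁ hinf hmsg) j
  refine div_le_of_le_mul₀ (by positivity) (by positivity) ?_
  calc (Nat.card {c : ConstraintChain k m s // ∃ j : Fin w, c.InSpec (V c j)} : ℝ)
      ≤ ∑ j : Fin w, (Nat.card {c : ConstraintChain k m s // c.InSpec (V c j)} : ℝ) := by
        exact_mod_cast natCard_exists_le_sum fun j (c : ConstraintChain k m s) => c.InSpec (V c j)
    _ ≤ ∑ _j : Fin w, P * Nat.card (ConstraintChain k m s) := sum_le_sum fun j _ => hcandidate j
    _ = w * P * Nat.card (ConstraintChain k m s) := by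
        rw [sum_const, card_univ, Fintype.card_fin, nsmul_eq_mul, mul_assoc]

/-- (Per-link success bound for message-augmented strategies.)
For a chain drawn from the random `(k,m,s)`-distribution and any deterministic
message-augmented `d'`-layer strategy of width `w` with per-link message sizes
`b ℓ`, the probability that some candidate tuple lies in `Spec_cg` is at most
`w · Π_{ℓ ∈ U} min(1, 2^(b ℓ) · s/m)`, where `U` is the set of uninformed
links. -/
theorem stmt5
    {k m s d' w : ℕ} (hs : 1 ≤ s) (hsm : s ≤ m) (hk : 1 ≤ k) (hd : d' < k)
    (f : Fin k → Fin d') (b : Fin k → ℕ)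
    (F : Fin k → Type) [∀ ℓ, Fintype (F ℓ)]
    (hF : ∀ ℓ : Fin k, Uninformed f ℓ → Fintype.card (F ℓ) ≤ 2 ^ (b ℓ))
    (M : ∀ ℓ : Fin k, (Fin m → Finset (Fin m)) → F ℓ)
    (V : ConstraintChain k m s → Fin w → Fin k → Fin m)
    (hV : ∀ c c' : ConstraintChain k m s, c.P1 = c'.P1 →
      (∀ ℓ : Fin k, Informed f ℓ → ∀ a : Fin m, c.row ℓ a = c'.row ℓ a) →
      (∀ ℓ : Fin k, Uninformed f ℓ → M ℓ (c.row ℓ) = M ℓ (c'.row ℓ)) →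
      V c = V c') :
    (Nat.card {c : ConstraintChain k m s // ∃ j : Fin w, c.InSpec (V c j)} : ℝ) /
        (Nat.card (ConstraintChain k m s) : ℝ) ≤
      (w : ℝ) * ∏ ℓ ∈ Finset.univ.filter (fun ℓ : Fin k => Uninformed f ℓ),
        min 1 ((2 : ℝ) ^ (b ℓ) * (s : ℝ) / (m : ℝ)) :=
  stmt5_general hs hsm f b F hF M V hV
end

section
/- Fix integers m, s with 1 ≤ s ≤ m and an integer b ≥ 0. Let 𝒮 be the family of s-element subsets of [m], let P be uniformly distributed over the set of all functions from [m] to 𝒮 (equivalently, the m rows P(1),…,P(m) are independent, each uniform on 𝒮), let F be a finite set with |F| ≤ 2^b, let M be any function from 𝒮^{[m]} to F, and let h : F → [m] × [m] be any function. Write (h₁, h₂) for the components of h. Then Pr[h₂(M(P)) ∈ P(h₁(M(P)))] ≤ 2^b · s/m. -/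
/-!
For a fixed message `f`, the event `(h f).2 ∈ P (h f).1` involves a single row of `P`, which is a
uniform `s`-subset of `[m]`; such a subset contains a given point with probability exactly `s/m`.
The event `h₂(M(P)) ∈ P(h₁(M(P)))` lies in the union of these `|F| ≤ 2^b` events.
-/

open Finset

theorem Fintype.card_subtype_comp_le_sum {α F : Type*} [Fintype α] [Fintype F] (g : α → F)
    (p : F → α → Prop) [∀ f x, Decidable (p f x)] :
    Fintype.card {x // p (g x) x} ≤ ∑ f, Fintype.card {x // p f x} := by
  classical
  simp only [Fintype.card_subtype]
  calc #{x | p (g x) x} ≤ #(univ.biUnion fun f => ({x | p f x} : Finset α)) :=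
        card_le_card fun x hx => mem_biUnion.mpr ⟨g x, mem_univ _, by simpa using hx⟩
    _ ≤ ∑ f, #{x | p f x} := card_biUnion_le

theorem Fintype.card_subtype_eval_mul {ι β : Type*} [Fintype ι] [DecidableEq ι] [Fintype β]
    (p : β → Prop) [DecidablePred p] (i : ι) :
    Fintype.card {P : ι → β // p (P i)} * Fintype.card β =
      Fintype.card {b // p b} * Fintype.card (ι → β) := by
  have e : {P : ι → β // p (P i)} ≃ {b // p b} × ({j // j ≠ i} → β) :=
    ((Equiv.funSplitAt i β).subtypeEquiv fun P => Iff.rfl).trans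
      Equiv.prodSubtypeFstEquivSubtypeProd
  rw [Fintype.card_congr e, Fintype.card_congr (Equiv.funSplitAt i β), Fintype.card_prod,
    Fintype.card_prod]
  ring

theorem card_subsets_mem_mul_card {α : Type*} [Fintype α] [DecidableEq α] (s : ℕ) (a : α) :
    Fintype.card {R : {R : Finset α // R.card = s} // a ∈ R.val} * Fintype.card α =
      s * Fintype.card {R : Finset α // R.card = s} := by
  rcases s with _ | k
  · have : IsEmpty {R : {R : Finset α // R.card = 0} // a ∈ R.val} :=
      ⟨fun ⟨⟨R, hR⟩, ha⟩ => by simp [card_eq_zero.mp hR] at ha⟩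
    simp
  have hcount : Fintype.card {R : {R : Finset α // R.card = k + 1} // a ∈ R.val} =
      (Fintype.card α - 1).choose k := by
    rw [Fintype.card_congr (Equiv.subtypeSubtypeEquivSubtypeInter
      (fun R : Finset α => R.card = k + 1) (a ∈ ·)), Fintype.card_subtype]
    have := card_filter_powersetCard_subset {a} univ (k + 1) (subset_univ _) (by simp)
    convert this using 2
    · ext R
      simp [and_comm]
    all_goals simp
  obtain ⟨n, hn⟩ : ∃ n, Fintype.card α = n + 1 :=
    Nat.exists_eq_add_one.mpr (Fintype.card_pos_iff.mpr ⟨a⟩)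
  rw [hcount, Fintype.card_finset_len, hn, Nat.add_sub_cancel, mul_comm, Nat.add_one_mul_choose_eq,
    mul_comm]

theorem card_rows_mem_mul_card {ι α : Type*} [Fintype ι] [DecidableEq ι] [Fintype α]
    [DecidableEq α] (s : ℕ) (i : ι) (a : α) :
    Fintype.card {P : ι → {R : Finset α // R.card = s} // a ∈ (P i).val} * Fintype.card α =
      s * Fintype.card (ι → {R : Finset α // R.card = s}) := by
  set S := {R : Finset α // R.card = s}
  rcases Nat.eq_zero_or_pos (Fintype.card S) with hS | hS
  · have : Nonempty ι := ⟨i⟩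
    have : IsEmpty S := Fintype.card_eq_zero_iff.mp hS
    simp
  refine Nat.eq_of_mul_eq_mul_right hS ?_
  calc Fintype.card {P : ι → S // a ∈ (P i).val} * Fintype.card α * Fintype.card S
      = Fintype.card {R : S // a ∈ R.val} * Fintype.card α * Fintype.card (ι → S) := by
        rw [mul_right_comm, Fintype.card_subtype_eval_mul (fun R : S => a ∈ R.val) i,
          mul_right_comm]
    _ = s * Fintype.card (ι → S) * Fintype.card S := by
        rw [card_subsets_mem_mul_card]; ring

theorem card_decoded_mem_mul_card_le {ι α F : Type*} [Fintype ι] [DecidableEq ι] [Fintype α]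
    [DecidableEq α] [Fintype F] (s : ℕ) (M : (ι → {R : Finset α // R.card = s}) → F)
    (h : F → ι × α) :
    Fintype.card {P : ι → {R : Finset α // R.card = s} // (h (M P)).2 ∈ (P (h (M P)).1).val} *
        Fintype.card α ≤
      Fintype.card F * (s * Fintype.card (ι → {R : Finset α // R.card = s})) := by
  calc _ ≤ (∑ f, Fintype.card {P : ι → {R : Finset α // R.card = s} //
          (h f).2 ∈ (P (h f).1).val}) * Fintype.card α :=
        Nat.mul_le_mul_right _
          (Fintype.card_subtype_comp_le_sum M fun f P => (h f).2 ∈ (P (h f).1).val)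
    _ = _ := by simp only [sum_mul, card_rows_mem_mul_card, sum_const, card_univ, smul_eq_mul]

theorem stmt11_general (m s b : ℕ)
    (F : Type) [Fintype F] (hF : Fintype.card F ≤ 2 ^ b)
    (M : (Fin m → {R : Finset (Fin m) // R.card = s}) → F)
    (h : F → Fin m × Fin m) :
    (Nat.card {P : Fin m → {R : Finset (Fin m) // R.card = s} //
          (h (M P)).2 ∈ (P (h (M P)).1).val} : ℝ) /
        (Nat.card (Fin m → {R : Finset (Fin m) // R.card = s}) : ℝ) ≤
      (2 ^ b : ℝ) * (s : ℝ) / (m : ℝ) := by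
  classical
  rcases Nat.eq_zero_or_pos m with rfl | hm
  · -- `h` would have to return a row index in the empty type `Fin 0`
    exact (h (M Fin.elim0)).1.elim0
  simp only [Nat.card_eq_fintype_card]
  rcases (Nat.cast_nonneg (α := ℝ) (Fintype.card (Fin m → {R : Finset (Fin m) // R.card = s})))
    |>.eq_or_lt with hΩ | hΩ
  · -- there are no `s`-subsets (`s > m`), and the left side is the junk value `x / 0 = 0`
    rw [← hΩ, div_zero]
    positivity
  rw [div_le_div_iff₀ hΩ (by exact_mod_cast hm)]
  have key := card_decoded_mem_mul_card_le s M h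
  rw [Fintype.card_fin, ← mul_assoc] at key
  exact_mod_cast key.trans (Nat.mul_le_mul_right _ (Nat.mul_le_mul_right _ hF))

/-- (Message-decoding lemma, row-family form.) Let `𝒮` be the
family of `s`-element subsets of `[m]`, let `P` be uniform over all functions
`[m] → 𝒮` (equivalently, the rows `P(1), …, P(m)` are independent, each
uniform on `𝒮`), let `F` be finite with `|F| ≤ 2^b`, let `M : 𝒮^[m] → F` be
any message function, and let `h : F → [m] × [m]` be any decoder with
components `(h₁, h₂)`. Then `Pr[h₂(M(P)) ∈ P(h₁(M(P)))] ≤ 2^b · s/m`. -/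
theorem stmt11 (m s b : ℕ) (hs : 1 ≤ s) (hsm : s ≤ m)
    (F : Type) [Fintype F] (hF : Fintype.card F ≤ 2 ^ b)
    (M : (Fin m → {R : Finset (Fin m) // R.card = s}) → F)
    (h : F → Fin m × Fin m) :
    (Nat.card {P : Fin m → {R : Finset (Fin m) // R.card = s} //
          (h (M P)).2 ∈ (P (h (M P)).1).val} : ℝ) /
        (Nat.card (Fin m → {R : Finset (Fin m) // R.card = s}) : ℝ) ≤
      (2 ^ b : ℝ) * (s : ℝ) / (m : ℝ) :=
  stmt11_general m s b F hF M h
end
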